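/- arXiv:2208.00018 — 6 statements merged into one kernel-verified Lean document; each statement's English description precedes it below -/
import Mathlib

section
/- Let A be an n×n complex diagonal matrix with diagonal entries λ₁,…,λₙ pairwise distinct, and let B = (b_{jk}) be an arbitrary n×n complex matrix. Then for each index i there exist δ > 0, a constant C > 0, and a function μ : (−δ, δ) → ℂ such that for every ε with |ε| < δ, μ(ε) is an eigenvalue of A + ε·B and |μ(ε) − λᵢ − ε·b_{ii}| ≤ C·ε². In particular the eigenvalues of A + εB are λᵢ + ε·b_{ii} + O(ε²). -/
open Polynomial

lemma aux_dvd {n : ℕ} {R : Type*} [CommRing R] (N : Matrix (Fin n) (Fin n) R)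
    (i : Fin n) (h0 : N i i = 0) (x : R) (hoff : ∀ j k, j ≠ k → x ∣ N j k) :
    x ^ 2 ∣ N.det := by
  rw [Matrix.det_apply]
  apply Finset.dvd_sum
  intro σ _
  rcases eq_or_ne σ 1 with rfl | hσ
  · have h1 : (∏ k : Fin n, N k k) = 0 :=
      Finset.prod_eq_zero (Finset.mem_univ i) h0
    simp [h1]
  · obtain ⟨j, hj⟩ : ∃ j, σ j ≠ j := by
      by_contra h; push_neg at h; exact hσ (Equiv.ext h)
    have hj2 : σ (σ j) ≠ σ j := fun h => hj (σ.injective h)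
    have hprod : x ^ 2 ∣ ∏ k : Fin n, N (σ k) k := by
      rw [← Finset.mul_prod_erase _ _ (Finset.mem_univ j),
        ← Finset.mul_prod_erase _ _ (Finset.mem_erase.mpr ⟨hj, Finset.mem_univ (σ j)⟩),
        pow_two]
      exact mul_dvd_mul (hoff _ _ hj) (dvd_mul_of_dvd_left (hoff _ _ hj2) _)
    rcases Int.units_eq_one_or (Equiv.Perm.sign σ) with h | h <;>
      simp [h, hprod, (dvd_neg).mpr hprod]

lemma aux_prod {s : Multiset ℝ} {a : ℝ} (ha : 0 ≤ a) (h : ∀ x ∈ s, a ≤ x) :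
    a ^ Multiset.card s ≤ s.prod := by
  induction s using Multiset.induction with
  | empty => simp
  | cons b t ih =>
    simp only [Multiset.card_cons, Multiset.prod_cons, pow_succ]
    have h1 : a ^ Multiset.card t ≤ t.prod := ih fun x hx => h x (Multiset.mem_cons_of_mem hx)
    have h2 : a ≤ b := h b (Multiset.mem_cons_self b t)
    have h3 : (0:ℝ) ≤ t.prod := le_trans (pow_nonneg ha _) h1
    calc a ^ Multiset.card t * a ≤ t.prod * b :=
      mul_le_mul h1 h2 ha h3
    _ = b * t.prod := mul_comm _ _

lemma aux_root {p : Polynomial ℂ} (hm : p.Monic) {s : ℝ} (hs : 0 < s)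
    (h : ‖p.eval 0‖ < s ^ p.natDegree) :
    ∃ t : ℂ, p.eval t = 0 ∧ ‖t‖ < s := by
  by_contra hcon
  push_neg at hcon
  have hsp : p.Splits := IsAlgClosed.splits p
  have hcard := Polynomial.splits_iff_card_roots.mp hsp
  have hfact := hsp.eq_prod_roots_of_monic hm
  have hev : p.eval 0 = (p.roots.map (fun a => -a)).prod := by
    conv_lhs => rw [hfact]
    rw [Polynomial.eval_multiset_prod]
    simp [Multiset.map_map, Function.comp]
  have habs : ‖p.eval 0‖ = (p.roots.map (fun a => ‖a‖)).prod := by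
    have hnh := map_multiset_prod (normHom : ℂ →*₀ ℝ) (p.roots.map (fun a => -a))
    simp only [normHom_apply] at hnh
    rw [hev, hnh]
    simp [Multiset.map_map, Function.comp]
  have hge : ∀ y ∈ p.roots.map (fun a => ‖a‖), s ≤ y := by
    intro y hy
    obtain ⟨a, ha, rfl⟩ := Multiset.mem_map.mp hy
    have : p.eval a = 0 := Polynomial.isRoot_of_mem_roots ha
    exact hcon a this
  have := aux_prod (le_of_lt hs) hge
  rw [Multiset.card_map, hcard] at this
  rw [habs] at h
  linarith

lemma aux_eval {n : ℕ} {S : Type*} [CommRing S] (N' : Matrix (Fin n) (Fin n) S) (t : S) :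
    Polynomial.eval t (Matrix.of (fun j k => -(N' j k)) : Matrix (Fin n) (Fin n) S).charpoly
      = (t • (1 : Matrix (Fin n) (Fin n) S) + N').det := by
  rw [Matrix.charpoly, ← Polynomial.coe_evalRingHom, RingHom.map_det]
  congr 1
  ext j k
  rcases eq_or_ne j k with rfl | h
  · simp [Matrix.charmatrix_apply_eq, Matrix.one_apply]
  · simp [Matrix.charmatrix_apply_ne _ _ _ h, Matrix.one_apply, h]

lemma aux_eval2 {n : ℕ} {R S : Type*} [CommRing R] [CommRing S] (N : Matrix (Fin n) (Fin n) R)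
    (f : R →+* S) (t : S) :
    Polynomial.eval t ((Matrix.of (fun j k => -(N j k)) : Matrix (Fin n) (Fin n) R).charpoly.map f)
      = (t • (1 : Matrix (Fin n) (Fin n) S) + N.map f).det := by
  have h : (Matrix.of (fun j k => -(N j k)) : Matrix (Fin n) (Fin n) R).map f
      = Matrix.of (fun j k => -((N.map f) j k)) := by
    ext j k; simp
  rw [← aux_eval (N.map f) t, ← h, Matrix.charpoly_map]

/-- For `A = diag(λ₁,…,λₙ)` with pairwise distinct entries and an arbitrary
complex matrix `B`, for each index `i` there exist `δ > 0`, `C > 0` and a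
function `μ` on `(−δ, δ)` whose value `μ(ε)` is an eigenvalue of `A + ε·B`
(a root of the characteristic polynomial) with
`|μ(ε) − λᵢ − ε·bᵢᵢ| ≤ C·ε²`; i.e. the eigenvalues are `λᵢ + ε·bᵢᵢ + O(ε²)`. -/
theorem stmt_1 (n : ℕ) (lam : Fin n → ℂ) (hdist : Function.Injective lam)
    (B : Matrix (Fin n) (Fin n) ℂ) (i : Fin n) :
    ∃ δ > (0 : ℝ), ∃ C > (0 : ℝ), ∃ μ : ℝ → ℂ,
      ∀ ε : ℝ, |ε| < δ →
        Matrix.det ((μ ε) • (1 : Matrix (Fin n) (Fin n) ℂ)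
            - (Matrix.diagonal lam + (ε : ℂ) • B)) = 0 ∧
        ‖μ ε - lam i - (ε : ℂ) * B i i‖ ≤ C * ε ^ 2 := by
  classical
  -- the perturbation matrix over ℂ[X] (X = ε)
  set N : Matrix (Fin n) (Fin n) (Polynomial ℂ) := Matrix.of (fun j k =>
    if j = k then Polynomial.C (lam i - lam j) + Polynomial.X * Polynomial.C (B i i - B j j)
    else -(Polynomial.X * Polynomial.C (B j k))) with hN
  have hNii : N i i = 0 := by simp [hN]
  have hNoff : ∀ j k, j ≠ k → (Polynomial.X : Polynomial ℂ) ∣ N j k := by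
    intro j k hjk
    simp only [hN, Matrix.of_apply, if_neg hjk]
    exact (dvd_mul_right _ _).neg_right
  obtain ⟨qp, hqp⟩ := aux_dvd N i hNii _ hNoff
  obtain ⟨M₀, hM₀⟩ := (isCompact_closedBall (0:ℂ) 1).exists_bound_of_continuousOn
    (Polynomial.continuous qp).continuousOn
  set M := max M₀ 1 with hM
  have hMpos : (0:ℝ) < M := lt_of_lt_of_le one_pos (le_max_right _ _)
  -- the two-variable characteristic polynomial
  set P : Polynomial (Polynomial ℂ) :=
    (Matrix.of (fun j k => -(N j k)) : Matrix (Fin n) (Fin n) (Polynomial ℂ)).charpoly with hPdef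
  have hP0 : P.coeff 0 = N.det := by
    rw [Polynomial.coeff_zero_eq_eval_zero, hPdef, aux_eval]
    simp
  have hXdvd : Polynomial.X ∣ (P - Polynomial.C (P.coeff 0)) :=
    Polynomial.X_dvd_iff.mpr (by simp)
  obtain ⟨Q, hQ⟩ := hXdvd
  have hPQ : P = Polynomial.C N.det + Polynomial.X * Q := by
    rw [← hP0, ← hQ]; ring
  set q : ℂ → ℂ → ℂ := fun e t => Polynomial.eval t (Q.map (Polynomial.evalRingHom e)) with hq
  have hgdecomp : ∀ e t : ℂ,
      ((t • (1 : Matrix (Fin n) (Fin n) ℂ)) + N.map (Polynomial.evalRingHom e)).det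
        = Polynomial.eval e N.det + t * q e t := by
    intro e t
    rw [← aux_eval2 N (Polynomial.evalRingHom e) t, ← hPdef, hPQ]
    simp [hq, Polynomial.eval_map, Polynomial.eval₂_mul]
  have hqeq : ∀ e t : ℂ, q e t = ∑ k ∈ Finset.range (Q.natDegree + 1),
      Polynomial.eval e (Q.coeff k) * t ^ k := by
    intro e t
    show Polynomial.eval t (Q.map (Polynomial.evalRingHom e)) = _
    rw [Polynomial.eval_map, Polynomial.eval₂_eq_sum_range]
    rfl
  have hqcont : Continuous fun p : ℂ × ℂ => q p.1 p.2 := by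
    have h : (fun p : ℂ × ℂ => q p.1 p.2) = fun p : ℂ × ℂ =>
        ∑ k ∈ Finset.range (Q.natDegree + 1), Polynomial.eval p.1 (Q.coeff k) * p.2 ^ k := by
      funext p; exact hqeq p.1 p.2
    rw [h]
    exact continuous_finset_sum _ fun k _ =>
      ((Polynomial.continuous _).comp continuous_fst).mul (continuous_snd.pow k)
  set c : ℂ := ∏ j ∈ Finset.univ.erase i, (lam i - lam j) with hcdef
  have hc : c ≠ 0 := Finset.prod_ne_zero_iff.mpr (fun j hj => sub_ne_zero.mpr
    fun h => (Finset.mem_erase.mp hj).1 (hdist h.symm))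
  have hN0 : N.map (Polynomial.evalRingHom (0:ℂ)) = Matrix.diagonal (fun j => lam i - lam j) := by
    ext j k
    rcases eq_or_ne j k with rfl | h
    · simp [hN]
    · simp [hN, h, Matrix.diagonal_apply_ne _ h]
  have heval0 : Polynomial.eval (0:ℂ) N.det = 0 := by rw [hqp]; simp
  have hg0 : ∀ t : ℂ, t * q 0 t = t * ∏ j ∈ Finset.univ.erase i, (t + (lam i - lam j)) := by
    intro t
    have h1 := hgdecomp 0 t
    rw [hN0] at h1
    have h2 : ((t • (1 : Matrix (Fin n) (Fin n) ℂ)) + Matrix.diagonal fun j => lam i - lam j)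
        = Matrix.diagonal (fun j => t + (lam i - lam j)) := by
      ext j k
      rcases eq_or_ne j k with rfl | h
      · simp
      · simp [Matrix.one_apply_ne h, Matrix.diagonal_apply_ne _ h]
    rw [h2, Matrix.det_diagonal, heval0, zero_add] at h1
    rw [← h1, ← Finset.mul_prod_erase _ _ (Finset.mem_univ i)]
    simp
  have hq00 : q 0 0 = c := by
    have hF : Continuous fun t : ℂ => ∏ j ∈ Finset.univ.erase i, (t + (lam i - lam j)) :=
      continuous_finset_prod _ fun j _ => continuous_id.add continuous_const
    have heq : (fun t : ℂ => q 0 t)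
        = fun t => ∏ j ∈ Finset.univ.erase i, (t + (lam i - lam j)) := by
      refine Continuous.ext_on (dense_compl_singleton (0:ℂ)) ?_ hF ?_
      · exact hqcont.comp (continuous_const.prodMk continuous_id)
      · intro t ht
        exact mul_left_cancel₀ ht (hg0 t)
    have h0 := congrFun heq 0
    simpa [hcdef] using h0
  have habsc : 0 < ‖c‖ := by
    simpa using (norm_pos_iff.mpr hc)
  obtain ⟨r, hr, hball⟩ := Metric.continuousAt_iff.mp (hqcont.continuousAt (x := ((0:ℂ),(0:ℂ))))
      (‖c‖ / 2) (by positivity)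
  have hqlow : ∀ e t : ℂ, ‖e‖ < r → ‖t‖ < r →
      ‖c‖ / 2 ≤ ‖q e t‖ := by
    intro e t he ht
    have hd : dist ((e,t)) (((0:ℂ),(0:ℂ))) < r := by
      rw [Prod.dist_eq]
      simp only [Complex.dist_eq, sub_zero]
      exact max_lt he ht
    have h5 := hball hd
    simp only [Complex.dist_eq, hq00] at h5
    have h6 := norm_add_le (q e t) (c - q e t)
    rw [add_sub_cancel] at h6
    have h7 : ‖c - q e t‖ = ‖q e t - c‖ := by
      rw [← norm_neg]; ring_nf
    linarith
  set s : ℝ := min (r/2) 1 with hs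
  have hspos : 0 < s := lt_min (by linarith) one_pos
  set C : ℝ := 2 * M / ‖c‖ with hC
  have hCpos : 0 < C := by positivity
  set t₀ : ℝ := Real.sqrt (s ^ n / M) with ht₀
  have ht₀pos : 0 < t₀ := Real.sqrt_pos.mpr (by positivity)
  set δ : ℝ := min 1 (min (r/2) t₀) with hδ
  have hδpos : 0 < δ := lt_min one_pos (lt_min (by linarith) ht₀pos)
  refine ⟨δ, hδpos, C, hCpos, ?_⟩
  have key : ∀ ε : ℝ, ∃ m : ℂ, |ε| < δ →
      ((m • (1 : Matrix (Fin n) (Fin n) ℂ) - (Matrix.diagonal lam + (ε:ℂ) • B)).det = 0 ∧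
       ‖m - lam i - (ε:ℂ) * B i i‖ ≤ C * ε ^ 2) := by
    intro ε
    by_cases hε : |ε| < δ
    swap
    · exact ⟨0, fun h => absurd h hε⟩
    have hε1 : |ε| ≤ 1 := le_of_lt (lt_of_lt_of_le hε (min_le_left _ _))
    have hεr : |ε| < r/2 :=
      lt_of_lt_of_le hε (le_trans (min_le_right _ _) (min_le_left _ _))
    have hεt₀ : |ε| < t₀ :=
      lt_of_lt_of_le hε (le_trans (min_le_right _ _) (min_le_right _ _))
    have habsε : ‖(ε:ℂ)‖ = |ε| := by rw [Complex.norm_real, Real.norm_eq_abs]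
    have hg0bound : ‖Polynomial.eval (ε:ℂ) N.det‖ ≤ M * ε^2 := by
      rw [hqp]
      simp only [Polynomial.eval_mul, Polynomial.eval_pow, Polynomial.eval_X, norm_mul, norm_pow,
        habsε]
      have h1 : ‖Polynomial.eval (ε:ℂ) qp‖ ≤ M := by
        refine le_trans (hM₀ _ ?_) (le_max_left _ _)
        simp only [Metric.mem_closedBall, Complex.dist_eq, sub_zero]
        rw [habsε]
        exact hε1
      have h2 : |ε|^2 = ε^2 := sq_abs ε
      nlinarith [norm_nonneg (Polynomial.eval (ε:ℂ) qp), abs_nonneg ε]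
    have hg0lt : ‖Polynomial.eval (ε:ℂ) N.det‖ < s ^ n := by
      have h2 : ε^2 < t₀^2 := by nlinarith [abs_nonneg ε, sq_abs ε]
      have h3 : t₀^2 = s^n / M := by
        rw [ht₀, Real.sq_sqrt (by positivity)]
      calc ‖Polynomial.eval (ε:ℂ) N.det‖ ≤ M * ε^2 := hg0bound
        _ < M * (s^n / M) := by rw [← h3]; exact (mul_lt_mul_iff_right₀ hMpos).mpr h2
        _ = s^n := by field_simp
    set pε : Polynomial ℂ := P.map (Polynomial.evalRingHom (ε:ℂ)) with hpε
    have hmapN : (Matrix.of (fun j k => -(N j k)) : Matrix (Fin n) (Fin n) (Polynomial ℂ)).map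
        (Polynomial.evalRingHom (ε:ℂ)) = Matrix.of (fun j k =>
          -((N.map (Polynomial.evalRingHom (ε:ℂ))) j k)) := by
      ext j k; simp
    have hmon : pε.Monic := by
      rw [hpε, hPdef, ← Matrix.charpoly_map]
      exact Matrix.charpoly_monic _
    have hdeg : pε.natDegree = n := by
      rw [hpε, hPdef, ← Matrix.charpoly_map, Matrix.charpoly_natDegree_eq_dim, Fintype.card_fin]
    have hpε0 : pε.eval 0 = Polynomial.eval (ε:ℂ) N.det := by
      rw [hpε, hPdef, aux_eval2, zero_smul, zero_add]
      exact (RingHom.map_det (Polynomial.evalRingHom (ε:ℂ)) N).symm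
    obtain ⟨t, htroot, hts⟩ := aux_root hmon hspos (by rw [hpε0, hdeg]; exact hg0lt)
    have hts' : ‖t‖ < r := lt_of_lt_of_le hts (le_trans (min_le_left _ _) (by linarith))
    have hεr' : ‖(ε:ℂ)‖ < r := by rw [habsε]; linarith
    have hlow := hqlow (ε:ℂ) t hεr' hts'
    have hroot : Polynomial.eval (ε:ℂ) N.det + t * q (ε:ℂ) t = 0 := by
      rw [← hgdecomp]
      rw [hpε, hPdef, aux_eval2] at htroot
      exact htroot
    have htb : ‖t‖ ≤ C * ε^2 := by
      have h7 : t * q (ε:ℂ) t = - Polynomial.eval (ε:ℂ) N.det := by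
        rw [eq_neg_iff_add_eq_zero, add_comm]; exact hroot
      have h8 : ‖t‖ * ‖q (ε:ℂ) t‖ ≤ M * ε^2 := by
        rw [← norm_mul, h7, norm_neg]
        exact hg0bound
      have h9 : ‖t‖ * (‖c‖ / 2) ≤ M * ε^2 :=
        le_trans (mul_le_mul_of_nonneg_left hlow (norm_nonneg t)) h8
      rw [hC]
      rw [div_mul_eq_mul_div, le_div_iff₀ habsc]
      nlinarith
    refine ⟨lam i + (ε:ℂ) * B i i + t, fun _ => ⟨?_, ?_⟩⟩
    · have hmat : (lam i + (ε:ℂ) * B i i + t) • (1 : Matrix (Fin n) (Fin n) ℂ)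
          - (Matrix.diagonal lam + (ε:ℂ) • B)
          = t • (1 : Matrix (Fin n) (Fin n) ℂ) + N.map (Polynomial.evalRingHom (ε:ℂ)) := by
        ext j k
        rcases eq_or_ne j k with rfl | h
        · simp [hN]; ring
        · simp [hN, h, Matrix.one_apply_ne h, Matrix.diagonal_apply_ne _ h]
          ring
      rw [hmat, hgdecomp, hroot]
    · have h10 : lam i + (ε:ℂ) * B i i + t - lam i - (ε:ℂ) * B i i = t := by ring
      rw [h10]
      exact htb
  choose μ hμ using key
  exact ⟨μ, fun ε hε => hμ ε hε⟩
end

section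
/- For real constants C₁, C₂, C₃, C₄, define the Hamiltonian H(X,h) = C₁·X·√(1−X²)·cos(h) + C₂·(1−X²)·cos(2h) + C₃·X + C₄·X² on the strip {(X,h) : X ∈ (−1,1), h ∈ ℝ}. Then the secular spin ODE system Ẋ = sin(h)·[C₁·X·√(1−X²) + 4·C₂·cos(h)·(1−X²)], ḣ = C₁·cos(h)·(1−2X²)/√(1−X²) − 2·C₂·X·cos(2h) + C₃ + 2·C₄·X coincides with the Hamiltonian vector field of H; i.e., for all X ∈ (−1,1) and h ∈ ℝ, the right-hand side of Ẋ equals −∂H/∂h(X,h) and the right-hand side of ḣ equals ∂H/∂X(X,h). -/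
open Real

noncomputable def spinHamiltonian (C₁ C₂ C₃ C₄ X h : ℝ) : ℝ :=
  C₁ * X * √(1 - X ^ 2) * cos h + C₂ * (1 - X ^ 2) * cos (2 * h) + C₃ * X + C₄ * X ^ 2

theorem hasDerivAt_sqrt_one_sub_sq {x : ℝ} (hx : x ∈ Set.Ioo (-1 : ℝ) 1) :
    HasDerivAt (fun y => √(1 - y ^ 2)) (-x / √(1 - x ^ 2)) x := by
  have hpos : 0 < 1 - x ^ 2 := by nlinarith [hx.1, hx.2]
  convert ((hasDerivAt_pow 2 x).const_sub 1).sqrt hpos.ne' using 1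
  field_simp
  ring

theorem hasDerivAt_spinHamiltonian_angle (C₁ C₂ C₃ C₄ X h : ℝ) :
    HasDerivAt (spinHamiltonian C₁ C₂ C₃ C₄ X)
      (-(sin h * (C₁ * X * √(1 - X ^ 2) + 4 * C₂ * cos h * (1 - X ^ 2)))) h := by
  have hcos2 : HasDerivAt (fun h' => cos (2 * h')) (-sin (2 * h) * 2) h := by
    simpa using ((hasDerivAt_id h).const_mul 2).cos
  refine ((((hasDerivAt_cos h).const_mul (C₁ * X * √(1 - X ^ 2))).add
    (hcos2.const_mul (C₂ * (1 - X ^ 2)))).add_const (C₃ * X)).add_const (C₄ * X ^ 2)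
    |>.congr_deriv ?_
  rw [sin_two_mul]
  ring

theorem hasDerivAt_spinHamiltonian_coord (C₁ C₂ C₃ C₄ h : ℝ) {X : ℝ}
    (hX : X ∈ Set.Ioo (-1 : ℝ) 1) :
    HasDerivAt (fun X' => spinHamiltonian C₁ C₂ C₃ C₄ X' h)
      (C₁ * cos h * (1 - 2 * X ^ 2) / √(1 - X ^ 2)
        - 2 * C₂ * X * cos (2 * h) + C₃ + 2 * C₄ * X) X := by
  have hpos : 0 < 1 - X ^ 2 := by nlinarith [hX.1, hX.2]
  have hsq : HasDerivAt (fun y : ℝ => y ^ 2) (2 * X) X := by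
    simpa using hasDerivAt_pow 2 X
  refine (((((hasDerivAt_id' X).const_mul C₁).mul (hasDerivAt_sqrt_one_sub_sq hX)).mul_const
    (cos h)).add ((hsq.const_sub 1).const_mul C₂ |>.mul_const (cos (2 * h)))).add
    ((hasDerivAt_id' X).const_mul C₃) |>.add (hsq.const_mul C₄) |>.congr_deriv ?_
  have hs : √(1 - X ^ 2) ^ 2 = 1 - X ^ 2 := sq_sqrt hpos.le
  field_simp
  linear_combination C₁ * cos h * hs

/-- The secular spin ODE system
`Ẋ = sin h·[C₁ X √(1−X²) + 4 C₂ cos h (1−X²)]`,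
`ḣ = C₁ cos h (1−2X²)/√(1−X²) − 2 C₂ X cos 2h + C₃ + 2 C₄ X`
coincides with the Hamiltonian vector field of
`H(X,h) = C₁ X √(1−X²) cos h + C₂ (1−X²) cos 2h + C₃ X + C₄ X²`
on the strip `X ∈ (−1,1)`:  Ẋ-rhs `= −∂H/∂h` and ḣ-rhs `= ∂H/∂X`. -/
theorem stmt_4 (C₁ C₂ C₃ C₄ : ℝ)
    (H : ℝ → ℝ → ℝ)
    (hH : ∀ X h : ℝ, H X h =
      C₁ * X * Real.sqrt (1 - X ^ 2) * Real.cos h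
        + C₂ * (1 - X ^ 2) * Real.cos (2 * h) + C₃ * X + C₄ * X ^ 2) :
    ∀ X ∈ Set.Ioo (-1 : ℝ) 1, ∀ h : ℝ,
      (Real.sin h * (C₁ * X * Real.sqrt (1 - X ^ 2)
          + 4 * C₂ * Real.cos h * (1 - X ^ 2))
        = - deriv (fun h' => H X h') h)
      ∧ (C₁ * Real.cos h * (1 - 2 * X ^ 2) / Real.sqrt (1 - X ^ 2)
          - 2 * C₂ * X * Real.cos (2 * h) + C₃ + 2 * C₄ * X
        = deriv (fun X' => H X' h) X) := by
  obtain rfl : H = spinHamiltonian C₁ C₂ C₃ C₄ := funext₂ hH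
  intro X hX h
  exact ⟨by rw [(hasDerivAt_spinHamiltonian_angle C₁ C₂ C₃ C₄ X h).deriv, neg_neg],
    (hasDerivAt_spinHamiltonian_coord C₁ C₂ C₃ C₄ h hX).deriv.symm⟩
end

section
/- Let C₁, C₂, C₃, C₄ be real constants and let X, h : ℝ → ℝ be differentiable functions with X(t) ∈ (−1,1) for all t, satisfying the secular spin ODE system Ẋ = sin(h)·[C₁·X·√(1−X²) + 4·C₂·cos(h)·(1−X²)], ḣ = C₁·cos(h)·(1−2X²)/√(1−X²) − 2·C₂·X·cos(2h) + C₃ + 2·C₄·X. Then the Hamiltonian H(X(t),h(t)) = C₁·X(t)·√(1−X(t)²)·cos(h(t)) + C₂·(1−X(t)²)·cos(2h(t)) + C₃·X(t) + C₄·X(t)² is constant in t. -/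
/-- Along any differentiable solution `(X(t), h(t))` of the secular spin ODE
system with `X(t) ∈ (−1,1)`, the Hamiltonian
`H(X,h) = C₁ X √(1−X²) cos h + C₂ (1−X²) cos 2h + C₃ X + C₄ X²`
is constant in time. -/
theorem stmt_5 (C₁ C₂ C₃ C₄ : ℝ) (X h : ℝ → ℝ)
    (hX : Differentiable ℝ X) (hh : Differentiable ℝ h)
    (hrange : ∀ t, X t ∈ Set.Ioo (-1 : ℝ) 1)
    (hX' : ∀ t, deriv X t =
      Real.sin (h t) * (C₁ * X t * Real.sqrt (1 - X t ^ 2)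
        + 4 * C₂ * Real.cos (h t) * (1 - X t ^ 2)))
    (hh' : ∀ t, deriv h t =
      C₁ * Real.cos (h t) * (1 - 2 * X t ^ 2) / Real.sqrt (1 - X t ^ 2)
        - 2 * C₂ * X t * Real.cos (2 * h t) + C₃ + 2 * C₄ * X t) :
    ∀ t : ℝ,
      C₁ * X t * Real.sqrt (1 - X t ^ 2) * Real.cos (h t)
          + C₂ * (1 - X t ^ 2) * Real.cos (2 * h t) + C₃ * X t + C₄ * X t ^ 2
        = C₁ * X 0 * Real.sqrt (1 - X 0 ^ 2) * Real.cos (h 0)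
          + C₂ * (1 - X 0 ^ 2) * Real.cos (2 * h 0) + C₃ * X 0 + C₄ * X 0 ^ 2 := by
  set F : ℝ → ℝ := fun t =>
      C₁ * X t * Real.sqrt (1 - X t ^ 2) * Real.cos (h t)
        + C₂ * (1 - X t ^ 2) * Real.cos (2 * h t) + C₃ * X t + C₄ * X t ^ 2 with hF
  have key : ∀ t, HasDerivAt F 0 t := by
    intro t
    obtain ⟨ha, hb⟩ := hrange t
    have hx2 : (0:ℝ) < 1 - X t ^ 2 := by nlinarith
    have hs : (0:ℝ) < Real.sqrt (1 - X t ^ 2) := Real.sqrt_pos.mpr hx2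
    have hsq : Real.sqrt (1 - X t ^ 2) ^ 2 = 1 - X t ^ 2 := Real.sq_sqrt hx2.le
    have hXd : HasDerivAt X (deriv X t) t := (hX t).hasDerivAt
    have hhd : HasDerivAt h (deriv h t) t := (hh t).hasDerivAt
    have h1mX : HasDerivAt (fun t => 1 - X t ^ 2)
        (0 - 2 * X t ^ 1 * deriv X t) t :=
      (hasDerivAt_const t (1:ℝ)).sub (hXd.pow 2)
    have hsqrt : HasDerivAt (fun t => Real.sqrt (1 - X t ^ 2))
        (1 / (2 * Real.sqrt (1 - X t ^ 2)) * (0 - 2 * X t ^ 1 * deriv X t)) t :=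
      (Real.hasDerivAt_sqrt hx2.ne').comp t h1mX
    have hA : HasDerivAt (fun t => C₁ * X t * Real.sqrt (1 - X t ^ 2) * Real.cos (h t))
        ((C₁ * deriv X t * Real.sqrt (1 - X t ^ 2)
          + C₁ * X t * (1 / (2 * Real.sqrt (1 - X t ^ 2)) * (0 - 2 * X t ^ 1 * deriv X t)))
          * Real.cos (h t)
          + C₁ * X t * Real.sqrt (1 - X t ^ 2) * (-Real.sin (h t) * deriv h t)) t :=
      ((hXd.const_mul C₁).mul hsqrt).mul hhd.cos
    have hB : HasDerivAt (fun t => C₂ * (1 - X t ^ 2) * Real.cos (2 * h t))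
        (C₂ * (0 - 2 * X t ^ 1 * deriv X t) * Real.cos (2 * h t)
          + C₂ * (1 - X t ^ 2) * (-Real.sin (2 * h t) * (2 * deriv h t))) t :=
      (h1mX.const_mul C₂).mul (hhd.const_mul 2).cos
    have hC : HasDerivAt (fun t => C₃ * X t) (C₃ * deriv X t) t := hXd.const_mul C₃
    have hD : HasDerivAt (fun t => C₄ * X t ^ 2) (C₄ * (2 * X t ^ 1 * deriv X t)) t :=
      (hXd.pow 2).const_mul C₄
    have total := ((hA.add hB).add hC).add hD
    have hzero :
        ((C₁ * deriv X t * Real.sqrt (1 - X t ^ 2)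
          + C₁ * X t * (1 / (2 * Real.sqrt (1 - X t ^ 2)) * (0 - 2 * X t ^ 1 * deriv X t)))
          * Real.cos (h t)
          + C₁ * X t * Real.sqrt (1 - X t ^ 2) * (-Real.sin (h t) * deriv h t)
          + (C₂ * (0 - 2 * X t ^ 1 * deriv X t) * Real.cos (2 * h t)
          + C₂ * (1 - X t ^ 2) * (-Real.sin (2 * h t) * (2 * deriv h t)))
          + C₃ * deriv X t + C₄ * (2 * X t ^ 1 * deriv X t)) = 0 := by
      rw [hX' t, hh' t, Real.cos_two_mul, Real.sin_two_mul]
      set s := Real.sqrt (1 - X t ^ 2) with hsdef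
      have h2 : (1:ℝ) - 2 * X t ^ 2 = s ^ 2 - X t ^ 2 := by rw [hsq]; ring
      rw [h2, ← hsq]
      field_simp
      ring
    rw [hzero] at total
    exact total
  have hdF : Differentiable ℝ F := fun t => (key t).differentiableAt
  have hd0 : ∀ t, deriv F t = 0 := fun t => (key t).deriv
  intro t
  have := is_const_of_deriv_eq_zero hdF hd0 t 0
  simpa [hF] using this
end

section
/- Set C₁ = C₂ = C₃ = −1 in the secular spin ODE system and let C₄ ∈ ℝ. Consider equilibrium points (X,h) with X ∈ (−1,1) and sin(h) ≠ 0 (equilibria off the axis sin h = 0). Then: (a) any such off-axis equilibrium satisfies X = 4/(8·C₄ − 7) and cos(h) = −X/(4·√(1−X²)); and (b) an off-axis equilibrium exists if and only if |8·C₄ − 7| > √17, i.e. if and only if C₄ > (7+√17)/8 or C₄ < (7−√17)/8. These thresholds are the two pitchfork bifurcation values of C₄. -/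
/-!
Off the axis `sin h = 0`, the equation `Ẋ = 0` is linear in `cos h` and forces
`cos h = -C₁ X / (4 C₂ √(1 - X²))`. Substituting this (and `cos 2h = 2 cos² h - 1`) into `ḣ`,
the terms with denominator `1 - X²` cancel and `ḣ` becomes affine in `X`; for
`C₁ = C₂ = C₃ = -1` this is `X (8 C₄ - 7) = 4`. An off-axis equilibrium then exists exactly when
the prescribed `cos h` lies strictly inside `(-1, 1)`, i.e. `17 X² < 16`, i.e. `(8 C₄ - 7)² > 17`.
-/

open Real Set

lemma Real.exists_sin_ne_zero_and_cos_eq_iff (c : ℝ) :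
    (∃ h : ℝ, sin h ≠ 0 ∧ cos h = c) ↔ c ∈ Ioo (-1) 1 := by
  rw [mem_Ioo, ← abs_lt, ← sq_lt_one_iff_abs_lt_one]
  constructor
  · rintro ⟨h, hsin, rfl⟩
    have : 0 < sin h ^ 2 := by positivity
    linarith [sin_sq_add_cos_sq h]
  · intro hc
    have hc' : c ∈ Icc (-1) 1 := by
      rw [mem_Icc, ← abs_le, ← sq_le_one_iff_abs_le_one]; exact hc.le
    refine ⟨arccos c, ?_, cos_arccos hc'.1 hc'.2⟩
    rw [sin_arccos]
    exact (sqrt_pos.mpr (by linarith)).ne'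

lemma one_sub_sq_pos_of_mem_Ioo {X : ℝ} (hX : X ∈ Ioo (-1) 1) : 0 < 1 - X ^ 2 := by
  obtain ⟨h₁, h₂⟩ := hX
  nlinarith

lemma mul_div_sqrt_one_sub_sq_mem_Ioo_iff {X : ℝ} (hX : X ∈ Ioo (-1) 1) (k : ℝ) :
    k * X / √(1 - X ^ 2) ∈ Ioo (-1) 1 ↔ (k ^ 2 + 1) * X ^ 2 < 1 := by
  have hpos := one_sub_sq_pos_of_mem_Ioo hX
  rw [mem_Ioo, ← abs_lt, ← sq_lt_one_iff_abs_lt_one, div_pow, sq_sqrt hpos.le,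
    div_lt_one hpos]
  constructor <;> intro h <;> nlinarith

namespace SecularSpin

-- With `C₁ = C₂ = C₃ = -1` these unfold to the two equations in `stmt_7`.
noncomputable def xDot (C₁ C₂ X h : ℝ) : ℝ :=
  sin h * (C₁ * X * √(1 - X ^ 2) + 4 * C₂ * cos h * (1 - X ^ 2))

noncomputable def hDot (C₁ C₂ C₃ C₄ X h : ℝ) : ℝ :=
  C₁ * cos h * (1 - 2 * X ^ 2) / √(1 - X ^ 2) - 2 * C₂ * X * cos (2 * h) + C₃ + 2 * C₄ * X

variable {C₁ C₂ C₃ C₄ X h : ℝ}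

lemma xDot_eq_zero_iff (hX : X ∈ Ioo (-1) 1) (hC₂ : C₂ ≠ 0) (hsin : sin h ≠ 0) :
    xDot C₁ C₂ X h = 0 ↔ cos h = -C₁ / (4 * C₂) * X / √(1 - X ^ 2) := by
  have hpos := one_sub_sq_pos_of_mem_Ioo hX
  have hs : 0 < √(1 - X ^ 2) := sqrt_pos.mpr hpos
  have hs2 : √(1 - X ^ 2) ^ 2 = 1 - X ^ 2 := sq_sqrt hpos.le
  have hfactor : C₁ * X * √(1 - X ^ 2) + 4 * C₂ * cos h * (1 - X ^ 2)
      = 4 * C₂ * √(1 - X ^ 2) ^ 2 * (cos h - -C₁ / (4 * C₂) * X / √(1 - X ^ 2)) := by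
    field_simp
    linear_combination (-4 * C₂ * cos h) * hs2
  rw [xDot, hfactor, mul_eq_zero, or_iff_right hsin, mul_eq_zero, sub_eq_zero,
    or_iff_right (by positivity)]

lemma hDot_eq_of_cos_eq (hX : X ∈ Ioo (-1) 1) (hC₂ : C₂ ≠ 0)
    (hcos : cos h = -C₁ / (4 * C₂) * X / √(1 - X ^ 2)) :
    hDot C₁ C₂ C₃ C₄ X h = (8 * C₂ * C₄ + 8 * C₂ ^ 2 - C₁ ^ 2) / (4 * C₂) * X + C₃ := by
  have hpos := one_sub_sq_pos_of_mem_Ioo hX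
  have hs2 : √(1 - X ^ 2) ^ 2 = 1 - X ^ 2 := sq_sqrt hpos.le
  have hs : √(1 - X ^ 2) ≠ 0 := (sqrt_pos.mpr hpos).ne'
  rw [hDot, cos_two_mul, hcos]
  field_simp
  linear_combination 4 * X * C₁ ^ 2 * hs2

lemma offAxis_equilibrium_iff (hX : X ∈ Ioo (-1) 1) (hC₂ : C₂ ≠ 0) (hsin : sin h ≠ 0) :
    xDot C₁ C₂ X h = 0 ∧ hDot C₁ C₂ C₃ C₄ X h = 0 ↔
      cos h = -C₁ / (4 * C₂) * X / √(1 - X ^ 2) ∧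
        (8 * C₂ * C₄ + 8 * C₂ ^ 2 - C₁ ^ 2) * X = -4 * C₂ * C₃ := by
  rw [xDot_eq_zero_iff hX hC₂ hsin]
  refine and_congr_right fun hcos => ?_
  rw [hDot_eq_of_cos_eq hX hC₂ hcos]
  constructor <;> intro H <;> field_simp at H ⊢ <;> linear_combination H

lemma exists_offAxis_equilibrium_iff (hX : X ∈ Ioo (-1) 1) (hC₂ : C₂ ≠ 0) :
    (∃ h, sin h ≠ 0 ∧ xDot C₁ C₂ X h = 0 ∧ hDot C₁ C₂ C₃ C₄ X h = 0) ↔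
      (8 * C₂ * C₄ + 8 * C₂ ^ 2 - C₁ ^ 2) * X = -4 * C₂ * C₃ ∧
        ((-C₁ / (4 * C₂)) ^ 2 + 1) * X ^ 2 < 1 := by
  rw [← mul_div_sqrt_one_sub_sq_mem_Ioo_iff hX, ← exists_sin_ne_zero_and_cos_eq_iff]
  constructor
  · rintro ⟨h, hsin, he⟩
    obtain ⟨hcos, hlin⟩ := (offAxis_equilibrium_iff hX hC₂ hsin).1 he
    exact ⟨hlin, h, hsin, hcos⟩
  · rintro ⟨hlin, h, hsin, hcos⟩
    exact ⟨h, hsin, (offAxis_equilibrium_iff hX hC₂ hsin).2 ⟨hcos, hlin⟩⟩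

end SecularSpin

lemma exists_mem_Ioo_mul_eq_four_and_sq_lt_iff (d : ℝ) :
    (∃ X ∈ Ioo (-1 : ℝ) 1, X * d = 4 ∧ 17 * X ^ 2 < 16) ↔ √17 < |d| := by
  rw [← sqrt_sq_eq_abs, sqrt_lt_sqrt_iff (by norm_num)]
  constructor
  · rintro ⟨X, -, hXd, hX⟩
    nlinarith [sq_nonneg (X * d)]
  · intro hd
    have hd0 : d ≠ 0 := by rintro rfl; norm_num at hd
    have hsq : 17 * (4 / d) ^ 2 < 16 := by
      rw [div_pow, mul_div_assoc', div_lt_iff₀ (by positivity)]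
      linarith
    have hmem : 4 / d ∈ Ioo (-1 : ℝ) 1 := by
      rw [mem_Ioo, ← abs_lt, ← sq_lt_one_iff_abs_lt_one]
      linarith
    exact ⟨4 / d, hmem, div_mul_cancel₀ 4 hd0, hsq⟩

/-- With `C₁ = C₂ = C₃ = −1` in the secular spin ODE system:
(a) any equilibrium `(X,h)` with `X ∈ (−1,1)` and `sin h ≠ 0` satisfies
`X = 4/(8 C₄ − 7)` and `cos h = −X/(4 √(1−X²))`;
(b) such an off-axis equilibrium exists iff `|8 C₄ − 7| > √17`,
i.e. iff `C₄ > (7+√17)/8` or `C₄ < (7−√17)/8`. -/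
theorem stmt_7 (C₄ : ℝ) :
    (∀ X ∈ Set.Ioo (-1 : ℝ) 1, ∀ h : ℝ, Real.sin h ≠ 0 →
      (Real.sin h * ((-1) * X * Real.sqrt (1 - X ^ 2)
          + 4 * (-1) * Real.cos h * (1 - X ^ 2)) = 0
        ∧ (-1) * Real.cos h * (1 - 2 * X ^ 2) / Real.sqrt (1 - X ^ 2)
          - 2 * (-1) * X * Real.cos (2 * h) + (-1) + 2 * C₄ * X = 0) →
      (X = 4 / (8 * C₄ - 7)
        ∧ Real.cos h = -X / (4 * Real.sqrt (1 - X ^ 2))))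
    ∧ ((∃ X ∈ Set.Ioo (-1 : ℝ) 1, ∃ h : ℝ, Real.sin h ≠ 0
        ∧ Real.sin h * ((-1) * X * Real.sqrt (1 - X ^ 2)
            + 4 * (-1) * Real.cos h * (1 - X ^ 2)) = 0
        ∧ (-1) * Real.cos h * (1 - 2 * X ^ 2) / Real.sqrt (1 - X ^ 2)
            - 2 * (-1) * X * Real.cos (2 * h) + (-1) + 2 * C₄ * X = 0)
      ↔ (Real.sqrt 17 < |8 * C₄ - 7|)) := by
  have hC₂ : (-1 : ℝ) ≠ 0 := by norm_num
  refine ⟨fun X hX h hsin he => ?_, ?_⟩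
  · obtain ⟨hcos, hlin⟩ :=
      (SecularSpin.offAxis_equilibrium_iff (C₃ := -1) (C₄ := C₄) hX hC₂ hsin).1 he
    have hXd : X * (8 * C₄ - 7) = 4 := by linear_combination -hlin
    have hd : 8 * C₄ - 7 ≠ 0 := right_ne_zero_of_mul (by rw [hXd]; norm_num)
    exact ⟨eq_div_of_mul_eq hd hXd, by rw [hcos]; ring⟩
  · rw [← exists_mem_Ioo_mul_eq_four_and_sq_lt_iff]
    refine exists_congr fun X => and_congr_right fun hX =>
      (SecularSpin.exists_offAxis_equilibrium_iff hX hC₂).trans ?_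
    refine and_congr ⟨fun H => by linear_combination -H, fun H => by linear_combination -H⟩ ?_
    constructor <;> intro H <;> linarith
end

section
/- Set C₁ = C₂ = C₃ = −1 in the secular spin ODE system. Then: (a) the point (X,h) = (−4/√17, 0) is an equilibrium of the system if and only if C₄ = (7 − √17)/8; and (b) the point (X,h) = (4/√17, π) is an equilibrium of the system if and only if C₄ = (7 + √17)/8. These are the parameter values at which the off-axis equilibrium branches meet the axis sin h = 0 (the two Hamiltonian pitchfork bifurcation points). -/
/-! On the axis `sin h = 0` the `X`-equation holds automatically and `cos 2h = 1`. At
`X = a / √(a² + 1)` one has `√(1 - X²) = 1 / √(a² + 1)`, so the `h`-equation becomes linear in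
`C₄`; for `a = ∓4` (and `cos h = ±1`) it reads `8 C₄ = 7 ∓ √17`. -/

open Real

lemma sqrt_one_sub_sq_div_sqrt {a c : ℝ} (hc : a ^ 2 + 1 = c) :
    √(1 - (a / √c) ^ 2) = (√c)⁻¹ := by
  have hc₀ : 0 < c := by nlinarith [sq_nonneg a]
  rw [div_pow, sq_sqrt hc₀.le, ← sqrt_inv]
  congr 1
  field_simp
  linarith

lemma equilibrium_on_axis_iff {C₄ a c h : ℝ} {f₁ f₂ : ℝ → ℝ → ℝ}
    (hf₁ : ∀ X h, f₁ X h = sin h * ((-1) * X * √(1 - X ^ 2)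
      + 4 * (-1) * cos h * (1 - X ^ 2)))
    (hf₂ : ∀ X h, f₂ X h =
      (-1) * cos h * (1 - 2 * X ^ 2) / √(1 - X ^ 2)
        - 2 * (-1) * X * cos (2 * h) + (-1) + 2 * C₄ * X)
    (hc : a ^ 2 + 1 = c) (hh : sin h = 0) :
    (f₁ (a / √c) h = 0 ∧ f₂ (a / √c) h = 0) ↔ cos h * (a ^ 2 - 1) + 2 * (C₄ + 1) * a = √c := by
  have hc₀ : 0 < c := by nlinarith [sq_nonneg a]
  have hs : 0 < √c := sqrt_pos.mpr hc₀
  have hcos₂ : cos (2 * h) = 1 := by rw [cos_two_mul, cos_sq', hh]; ring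
  have hf₂_eq : f₂ (a / √c) h
      = (cos h * (a ^ 2 - 1) + 2 * (C₄ + 1) * a - √c) / √c := by
    rw [hf₂, sqrt_one_sub_sq_div_sqrt hc, hcos₂, div_pow, sq_sqrt hc₀.le]
    field_simp
    rw [sq_sqrt hc₀.le, ← hc]
    ring
  rw [hf₁, hh, zero_mul, hf₂_eq, div_eq_zero_iff, sub_eq_zero]
  simp [hs.ne']

/-- With `C₁ = C₂ = C₃ = −1` in the secular spin ODE system:
(a) `(X,h) = (−4/√17, 0)` is an equilibrium iff `C₄ = (7 − √17)/8`;
(b) `(X,h) = (4/√17, π)` is an equilibrium iff `C₄ = (7 + √17)/8`.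
These are the two Hamiltonian pitchfork bifurcation values of `C₄`. -/
theorem stmt_8 (C₄ : ℝ)
    (f₁ f₂ : ℝ → ℝ → ℝ)
    (hf₁ : ∀ X h, f₁ X h = Real.sin h * ((-1) * X * Real.sqrt (1 - X ^ 2)
      + 4 * (-1) * Real.cos h * (1 - X ^ 2)))
    (hf₂ : ∀ X h, f₂ X h =
      (-1) * Real.cos h * (1 - 2 * X ^ 2) / Real.sqrt (1 - X ^ 2)
        - 2 * (-1) * X * Real.cos (2 * h) + (-1) + 2 * C₄ * X) :
    ((f₁ (-4 / Real.sqrt 17) 0 = 0 ∧ f₂ (-4 / Real.sqrt 17) 0 = 0)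
      ↔ C₄ = (7 - Real.sqrt 17) / 8)
    ∧ ((f₁ (4 / Real.sqrt 17) Real.pi = 0 ∧ f₂ (4 / Real.sqrt 17) Real.pi = 0)
      ↔ C₄ = (7 + Real.sqrt 17) / 8) := by
  constructor
  · rw [equilibrium_on_axis_iff hf₁ hf₂ (by norm_num) sin_zero, cos_zero]
    constructor <;> intro h <;> linarith
  · rw [equilibrium_on_axis_iff hf₁ hf₂ (by norm_num) sin_pi, cos_pi]
    constructor <;> intro h <;> linarith
end

section
/- Set C₁ = C₂ = C₃ = −1 in the secular spin ODE system and let C₄ ∈ ℝ. Then: (a) the point (X,h) = (0, π) is an equilibrium of the system for every value of C₄; (b) the Jacobian matrix of the vector field at (0, π) equals [[0, −4], [2 + 2·C₄, 0]], whose determinant is 8·(1 + C₄); consequently (c) the linearization at (0,π) has a pair of purely imaginary nonzero eigenvalues (linear center) when C₄ > −1, a pair of real nonzero eigenvalues of opposite sign (saddle) when C₄ < −1, and is degenerate (zero determinant) exactly at C₄ = −1. -/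
/-!
On the line `h = π` the factor `sin h` makes `Ẋ` vanish identically, and at `X = 0` the
term `(1 - 2X²)/√(1 - X²)` is stationary, so the Jacobian at `(0, π)` is anti-diagonal,
`[[0, 4C₂], [2C₄ - 2C₂, 0]]`. An anti-diagonal `[[0, a], [b, 0]]` has characteristic
polynomial `μ² - ab`, with roots `±√(ab)`: a purely imaginary pair when `ab < 0` and a real
pair of opposite signs when `ab > 0`. Here `ab = -8(1 + C₄)`.
-/

open Real

noncomputable section

namespace SecularSpin

variable (C₁ C₂ C₃ C₄ : ℝ)

def fieldX (X h : ℝ) : ℝ :=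
  sin h * (C₁ * X * √(1 - X ^ 2) + 4 * C₂ * cos h * (1 - X ^ 2))

def fieldH (X h : ℝ) : ℝ :=
  C₁ * cos h * (1 - 2 * X ^ 2) / √(1 - X ^ 2) - 2 * C₂ * X * cos (2 * h) + C₃ + 2 * C₄ * X

theorem fieldX_pi (X : ℝ) : fieldX C₁ C₂ X π = 0 := by
  simp [fieldX]

theorem fieldH_zero_pi : fieldH C₁ C₂ C₃ C₄ 0 π = C₃ - C₁ := by
  simp [fieldH, neg_add_eq_sub]

theorem hasDerivAt_fieldX_zero_h (h : ℝ) :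
    HasDerivAt (fieldX C₁ C₂ 0) (4 * C₂ * cos (2 * h)) h := by
  have hfun : fieldX C₁ C₂ 0 = fun h => 2 * C₂ * sin (2 * h) := by
    funext h
    simp only [fieldX, sin_two_mul]
    ring
  rw [hfun]
  exact ((((hasDerivAt_id' h).const_mul 2).sin).const_mul (2 * C₂)).congr_deriv (by ring)

theorem hasDerivAt_fieldH_zero_h (h : ℝ) :
    HasDerivAt (fieldH C₁ C₂ C₃ C₄ 0) (-C₁ * sin h) h := by
  have hfun : fieldH C₁ C₂ C₃ C₄ 0 = fun h => C₁ * cos h + C₃ := by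
    funext h
    simp [fieldH]
  rw [hfun]
  exact (((hasDerivAt_cos h).const_mul C₁).add_const C₃).congr_deriv (by ring)

theorem hasDerivAt_one_sub_two_mul_sq_div_sqrt_zero :
    HasDerivAt (fun X : ℝ => (1 - 2 * X ^ 2) / √(1 - X ^ 2)) 0 0 := by
  have hden : HasDerivAt (fun X : ℝ => √(1 - X ^ 2)) 0 0 := by
    simpa using ((hasDerivAt_pow 2 (0 : ℝ)).const_sub 1).sqrt (by norm_num)
  have hnum : HasDerivAt (fun X : ℝ => 1 - 2 * X ^ 2) 0 0 := by
    simpa using ((hasDerivAt_pow 2 (0 : ℝ)).const_mul 2).const_sub 1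
  simpa [Pi.div_def] using hnum.div hden (by norm_num)

theorem hasDerivAt_fieldH_X_zero (h : ℝ) :
    HasDerivAt (fun X => fieldH C₁ C₂ C₃ C₄ X h) (2 * C₄ - 2 * C₂ * cos (2 * h)) 0 := by
  have hfun : (fun X => fieldH C₁ C₂ C₃ C₄ X h) = fun X =>
      C₁ * cos h * ((1 - 2 * X ^ 2) / √(1 - X ^ 2)) + (2 * C₄ - 2 * C₂ * cos (2 * h)) * X + C₃ := by
    funext X
    simp only [fieldH]
    ring
  rw [hfun]
  exact (((hasDerivAt_one_sub_two_mul_sq_div_sqrt_zero.const_mul (C₁ * cos h)).add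
    ((hasDerivAt_id' (0 : ℝ)).const_mul (2 * C₄ - 2 * C₂ * cos (2 * h)))).add_const C₃).congr_deriv
    (by ring)

theorem jacobian_zero_pi :
    !![deriv (fun X => fieldX C₁ C₂ X π) 0, deriv (fun h => fieldX C₁ C₂ 0 h) π;
       deriv (fun X => fieldH C₁ C₂ C₃ C₄ X π) 0, deriv (fun h => fieldH C₁ C₂ C₃ C₄ 0 h) π]
      = !![0, 4 * C₂; 2 * C₄ - 2 * C₂, 0] := by
  simp only [fieldX_pi, deriv_const, (hasDerivAt_fieldX_zero_h C₁ C₂ π).deriv,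
    (hasDerivAt_fieldH_X_zero C₁ C₂ C₃ C₄ π).deriv, (hasDerivAt_fieldH_zero_h C₁ C₂ C₃ C₄ π).deriv,
    cos_two_pi, sin_pi]
  simp

end SecularSpin

end

theorem Matrix.det_smul_one_sub_antidiag {R : Type*} [CommRing R] (μ a b : R) :
    (μ • (1 : Matrix (Fin 2) (Fin 2) R) - !![0, a; b, 0]).det = μ ^ 2 - a * b := by
  simp [Matrix.det_fin_two, sq]

theorem Matrix.det_smul_one_sub_antidiag_eq_zero_iff {R : Type*} [CommRing R] [NoZeroDivisors R]
    {a b z : R} (hz : z ^ 2 = a * b) (μ : R) :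
    (μ • (1 : Matrix (Fin 2) (Fin 2) R) - !![0, a; b, 0]).det = 0 ↔ μ = z ∨ μ = -z := by
  rw [Matrix.det_smul_one_sub_antidiag, sub_eq_zero, ← hz, sq_eq_sq_iff_eq_or_eq_neg]

theorem Complex.ofReal_sqrt_sq {x : ℝ} (hx : 0 ≤ x) : ((√x : ℝ) : ℂ) ^ 2 = x := by
  rw [← Complex.ofReal_pow, Real.sq_sqrt hx]

/-- With `C₁ = C₂ = C₃ = −1` in the secular spin ODE system:
(a) `(0, π)` is an equilibrium for every `C₄`;
(b) the Jacobian of the vector field at `(0, π)` is `[[0, −4], [2+2C₄, 0]]`,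
with determinant `8(1+C₄)`;
(c) the linearization has a purely imaginary nonzero pair of eigenvalues
(linear center) when `C₄ > −1`, a real pair of opposite signs (saddle) when
`C₄ < −1`, and is degenerate (zero determinant) exactly when `C₄ = −1`. -/
theorem stmt_9 (C₄ : ℝ)
    (f₁ f₂ : ℝ → ℝ → ℝ)
    (hf₁ : ∀ X h, f₁ X h = Real.sin h * ((-1) * X * Real.sqrt (1 - X ^ 2)
      + 4 * (-1) * Real.cos h * (1 - X ^ 2)))
    (hf₂ : ∀ X h, f₂ X h =
      (-1) * Real.cos h * (1 - 2 * X ^ 2) / Real.sqrt (1 - X ^ 2)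
        - 2 * (-1) * X * Real.cos (2 * h) + (-1) + 2 * C₄ * X)
    (J : Matrix (Fin 2) (Fin 2) ℝ)
    (hJ : J = !![deriv (fun X => f₁ X Real.pi) 0, deriv (fun h => f₁ 0 h) Real.pi;
                 deriv (fun X => f₂ X Real.pi) 0, deriv (fun h => f₂ 0 h) Real.pi]) :
    -- (a) equilibrium for every C₄
    (f₁ 0 Real.pi = 0 ∧ f₂ 0 Real.pi = 0)
    -- (b) Jacobian and its determinant
    ∧ J = !![(0 : ℝ), -4; 2 + 2 * C₄, 0]
    ∧ J.det = 8 * (1 + C₄)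
    -- (c) spectral classification of the linearization
    ∧ (C₄ > -1 → ∃ ω : ℝ, 0 < ω ∧ ∀ μ : ℂ,
        Matrix.det (μ • (1 : Matrix (Fin 2) (Fin 2) ℂ)
            - !![(0 : ℂ), -4; 2 + 2 * (C₄ : ℂ), 0]) = 0
          ↔ (μ = Complex.I * ω ∨ μ = -(Complex.I * ω)))
    ∧ (C₄ < -1 → ∃ r : ℝ, 0 < r ∧ ∀ μ : ℂ,
        Matrix.det (μ • (1 : Matrix (Fin 2) (Fin 2) ℂ)
            - !![(0 : ℂ), -4; 2 + 2 * (C₄ : ℂ), 0]) = 0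
          ↔ (μ = (r : ℂ) ∨ μ = -(r : ℂ)))
    ∧ (J.det = 0 ↔ C₄ = -1) := by
  obtain rfl : f₁ = SecularSpin.fieldX (-1) (-1) := funext₂ hf₁
  obtain rfl : f₂ = SecularSpin.fieldH (-1) (-1) (-1) C₄ := funext₂ hf₂
  have hJval : J = !![(0 : ℝ), -4; 2 + 2 * C₄, 0] := by
    rw [hJ, SecularSpin.jacobian_zero_pi]
    norm_num [add_comm]
  have hdet : J.det = 8 * (1 + C₄) := by
    rw [hJval, Matrix.det_fin_two_of]
    ring
  refine ⟨⟨SecularSpin.fieldX_pi _ _ _, by simp [SecularSpin.fieldH_zero_pi]⟩, hJval, hdet,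
    fun hC₄ => ?_, fun hC₄ => ?_, by rw [hdet]; constructor <;> intro h <;> linarith⟩
  · have hpos : 0 < 8 + 8 * C₄ := by linarith
    refine ⟨√(8 + 8 * C₄), Real.sqrt_pos.mpr hpos,
      Matrix.det_smul_one_sub_antidiag_eq_zero_iff ?_⟩
    rw [mul_pow, Complex.I_sq, Complex.ofReal_sqrt_sq hpos.le]
    push_cast
    ring
  · have hpos : 0 < -(8 + 8 * C₄) := by linarith
    refine ⟨√(-(8 + 8 * C₄)), Real.sqrt_pos.mpr hpos,
      Matrix.det_smul_one_sub_antidiag_eq_zero_iff ?_⟩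
    rw [Complex.ofReal_sqrt_sq hpos.le]
    push_cast
    ring
end
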